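/- Let f, g : ω → {0,1} be distinct. Then χ^f is not finitely covered by χ^g, i.e., some finite subsequence of χ^f does not embed into χ^g. -/
import Mathlib


/-! ## Syntax of tense logic -/

inductive TForm : Type
  | var : ℕ → TForm
  | bot : TForm
  | imp : TForm → TForm → TForm
  | box : TForm → TForm
  | bdia : TForm → TForm
  deriving DecidableEq

namespace TForm

def neg (φ : TForm) : TForm := imp φ bot

def top : TForm := neg bot

def orf (φ ψ : TForm) : TForm := imp (neg φ) ψ

def andf (φ ψ : TForm) : TForm := neg (imp φ (neg ψ))

def dia (φ : TForm) : TForm := neg (box (neg φ))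

def bbox (φ : TForm) : TForm := neg (bdia (neg φ))

def subst (s : ℕ → TForm) : TForm → TForm
  | var n => s n
  | bot => bot
  | imp φ ψ => imp (subst s φ) (subst s ψ)
  | box φ => box (subst s φ)
  | bdia φ => bdia (subst s φ)

/-- Modal degree of a formula. -/
def mdeg : TForm → ℕ
  | var _ => 0
  | bot => 0
  | imp φ ψ => max (mdeg φ) (mdeg ψ)
  | box φ => mdeg φ + 1
  | bdia φ => mdeg φ + 1

end TForm

open TForm

/-! ## Frames and relational notions -/

/-- `R[U] = {z : ∃ y ∈ U, R y z}`. -/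
def Rimg {X : Type*} (R : X → X → Prop) (U : Set X) : Set X := {z | ∃ y ∈ U, R y z}

/-- `R[x]`, the set of `R`-successors of `x`. -/
def rsucc {X : Type*} (R : X → X → Prop) (x : X) : Set X := {y | R x y}

/-- `R̆[x]`, the set of `R`-predecessors of `x`. -/
def rpred {X : Type*} (R : X → X → Prop) (x : X) : Set X := {y | R y x}

/-- `R_♯^k[x]`. -/
def rsharp {X : Type*} (R : X → X → Prop) : ℕ → X → Set X
  | 0, x => {x}
  | k+1, x => rsharp R k x ∪ Rimg R (rsharp R k x) ∪ Rimg (flip R) (rsharp R k x)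

/-- `R_♯^ω[x]`. -/
def rsharpOmega {X : Type*} (R : X → X → Prop) (x : X) : Set X := ⋃ k : ℕ, rsharp R k x

/-- A frame is rooted if it is generated by a single point under `R` and its converse. -/
def Rooted {X : Type*} (R : X → X → Prop) : Prop := ∃ x : X, ∀ y : X, y ∈ rsharpOmega R x

/-- A frame is image-finite if `R_♯^1[x]` is finite for every `x`. -/
def ImageFinite {X : Type*} (R : X → X → Prop) : Prop := ∀ x : X, (rsharp R 1 x).Finite

/-! ## Semantics -/

def TSat {X : Type*} (R : X → X → Prop) (V : ℕ → Set X) : TForm → Set X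
  | .var n => V n
  | .bot => ∅
  | .imp φ ψ => (TSat R V φ)ᶜ ∪ TSat R V ψ
  | .box φ => {x | ∀ y, R x y → y ∈ TSat R V φ}
  | .bdia φ => {x | ∃ y, R y x ∧ y ∈ TSat R V φ}

/-- `φ` is valid at the point `x` of the frame `(X,R)`. -/
def ValidAt {X : Type*} (R : X → X → Prop) (x : X) (φ : TForm) : Prop :=
  ∀ V : ℕ → Set X, x ∈ TSat R V φ

/-- `φ` is valid in the frame `(X,R)`. -/
def Valid {X : Type*} (R : X → X → Prop) (φ : TForm) : Prop :=
  ∀ (V : ℕ → Set X) (x : X), x ∈ TSat R V φ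

/-- The tense logic of a frame. -/
def FrameLog {X : Type*} (R : X → X → Prop) : Set TForm := {φ | Valid R φ}

/-! ## Tense logics -/

/-- `φ` is a substitution instance of a classical propositional tautology. -/
def IsTautInstance (φ : TForm) : Prop :=
  ∀ v : TForm → Prop, ¬ v .bot → (∀ ψ χ, v (.imp ψ χ) ↔ (v ψ → v χ)) → v φ

/-- A (normal) tense logic. -/
structure TenseLogic (L : Set TForm) : Prop where
  taut_mem : ∀ φ, IsTautInstance φ → φ ∈ L
  adjoint : ∀ φ ψ : TForm, TForm.imp (.bdia φ) ψ ∈ L ↔ TForm.imp φ (.box ψ) ∈ L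
  mp : ∀ φ ψ : TForm, TForm.imp φ ψ ∈ L → φ ∈ L → ψ ∈ L
  subst_mem : ∀ φ ∈ L, ∀ s : ℕ → TForm, TForm.subst s φ ∈ L

def Consistent (L : Set TForm) : Prop := TForm.bot ∉ L

/-- A logic is tabular if it is the logic of some finite (nonempty) frame. -/
def Tabular (L : Set TForm) : Prop :=
  ∃ (X : Type) (_ : Finite X) (_ : Nonempty X) (R : X → X → Prop), L = FrameLog R

/-- A logic is pretabular if it is not tabular while every proper consistent
tense-logic extension of it is tabular. -/
def Pretabular (L : Set TForm) : Prop :=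
  ¬ Tabular L ∧
    ∀ L' : Set TForm, TenseLogic L' → L ⊆ L' → L ≠ L' → Consistent L' → Tabular L'

/-- The set of pretabular tense logics extending `L0`. -/
def PTAB (L0 : Set TForm) : Set (Set TForm) :=
  {L | TenseLogic L ∧ L0 ⊆ L ∧ Pretabular L}

/-! ## Some formulas -/

def bigConj : List TForm → TForm
  | [] => TForm.top
  | φ :: l => andf φ (bigConj l)

def bigDisj : List TForm → TForm
  | [] => TForm.bot
  | φ :: l => orf φ (bigDisj l)

/-- `Δ^k φ`. -/
def tdelta : ℕ → TForm → TForm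
  | 0, φ => φ
  | k+1, φ => orf (tdelta k φ) (orf (dia (tdelta k φ)) (TForm.bdia (tdelta k φ)))

/-- `∇^k φ = ¬Δ^k¬φ`. -/
def tnabla (k : ℕ) (φ : TForm) : TForm := neg (tdelta k (neg φ))

/-- `ψ_i = ¬p_0 ∧ ⋯ ∧ ¬p_{i-1} ∧ p_i`. -/
def tpsi (i : ℕ) : TForm :=
  bigConj (((List.range i).map fun j => neg (var j)) ++ [var i])

/-- `tab^T_n = ¬(Δ^n ψ_0 ∧ ⋯ ∧ Δ^n ψ_n)`. -/
def tabT (n : ℕ) : TForm :=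
  neg (bigConj ((List.range (n+1)).map fun i => tdelta n (tpsi i)))

/-! ## General frames -/

structure IsGeneralFrame {X : Type*} (R : X → X → Prop) (A : Set (Set X)) : Prop where
  empty_mem : ∅ ∈ A
  inter_mem : ∀ U ∈ A, ∀ V ∈ A, U ∩ V ∈ A
  compl_mem : ∀ U ∈ A, Uᶜ ∈ A
  fimg_mem : ∀ U ∈ A, Rimg R U ∈ A
  bimg_mem : ∀ U ∈ A, Rimg (flip R) U ∈ A

def Differentiated {X : Type*} (A : Set (Set X)) : Prop :=
  ∀ x y : X, x ≠ y → ∃ U ∈ A, x ∈ U ∧ y ∉ U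

def Tight {X : Type*} (R : X → X → Prop) (A : Set (Set X)) : Prop :=
  ∀ x y : X, ¬ R x y →
    ∃ U ∈ A, ∃ V ∈ A, (x ∈ U ∧ x ∉ Rimg (flip R) V) ∧ (y ∈ V ∧ y ∉ Rimg R U)

/-- Validity in a general frame: truth at all points under all valuations into `A`. -/
def GValid {X : Type*} (R : X → X → Prop) (A : Set (Set X)) (φ : TForm) : Prop :=
  ∀ V : ℕ → Set X, (∀ n, V n ∈ A) → ∀ x, x ∈ TSat R V φ

/-- Validity at a point of a general frame. -/
def GValidAt {X : Type*} (R : X → X → Prop) (A : Set (Set X)) (x : X) (φ : TForm) : Prop :=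
  ∀ V : ℕ → Set X, (∀ n, V n ∈ A) → x ∈ TSat R V φ

/-! ## (Local) t-morphisms -/

/-- Domain of a partial function. -/
def pdom {X Y : Type*} (f : X → Option Y) : Set X := {x | (f x).isSome}

/-- Image of a set under a partial function. -/
def pimg {X Y : Type*} (f : X → Option Y) (S : Set X) : Set Y := {y | ∃ x ∈ S, f x = some y}

/-- Range of a partial function. -/
def pran {X Y : Type*} (f : X → Option Y) : Set Y := {y | ∃ x, f x = some y}

/-- `f` is a `k`-t-morphism from `((X,R),x)` to `((Y,S),y)`. -/
def IsKTMorphism {X Y : Type*} (R : X → X → Prop) (S : Y → Y → Prop)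
    (f : X → Option Y) (x : X) (y : Y) (k : ℕ) : Prop :=
  rsharp R k x ⊆ pdom f ∧ f x = some y ∧
    ∀ z ∈ rsharp R (k-1) x, ∀ z' : Y, f z = some z' →
      pimg f (rsucc R z) = rsucc S z' ∧ pimg f (rpred R z) = rpred S z'

/-- A (total) t-morphism between frames. -/
def IsTMorphism {X Y : Type*} (R : X → X → Prop) (S : Y → Y → Prop) (f : X → Y) : Prop :=
  ∀ x : X, f '' rsucc R x = rsucc S (f x) ∧ f '' rpred R x = rpred S (f x)

/-! ## Generalized Jankov formulas -/

def finPairs (n : ℕ) : List (Fin n × Fin n) :=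
  (List.finRange n).flatMap fun i => (List.finRange n).map fun j => (i, j)

open Classical in
/-- The generalized Jankov formula `𝒥^k(𝔊,y)`, relative to an enumeration
`e : Fin n → Y` of `S_♯^k[y]` with `e 0 = y`. -/
noncomputable def jankov {Y : Type*} (S : Y → Y → Prop) (k n : ℕ) (e : Fin n → Y) : TForm :=
  andf (andf (TForm.var 0) (tnabla k (bigDisj ((List.finRange n).map fun i => TForm.var i.val))))
    (andf
      (bigConj (((finPairs n).filter fun p => decide (p.1 ≠ p.2)).map fun p =>
        tnabla k (TForm.imp (.var p.1.val) (neg (.var p.2.val)))))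
      (andf
        (bigConj (((finPairs n).filter fun p => decide (S (e p.1) (e p.2))).map fun p =>
          tnabla (k-1) (andf (TForm.imp (.var p.1.val) (dia (.var p.2.val)))
            (TForm.imp (.var p.2.val) (.bdia (.var p.1.val))))))
        (bigConj (((finPairs n).filter fun p => decide (¬ S (e p.1) (e p.2))).map fun p =>
          tnabla (k-1) (andf (TForm.imp (.var p.1.val) (neg (dia (.var p.2.val))))
            (TForm.imp (.var p.2.val) (neg (.bdia (.var p.1.val)))))))))

/-! ## Bounded-parameter formulas -/

/-- `bz_n = Δ^{n+1}p → Δ^n p`. -/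
def bz (n : ℕ) : TForm := TForm.imp (tdelta (n+1) (var 0)) (tdelta n (var 0))

def offDiag (n : ℕ) : List (Fin n × Fin n) :=
  (finPairs n).filter fun p => decide (p.1 ≠ p.2)

/-- `bw^+_n`. -/
def bwp (n : ℕ) : TForm :=
  TForm.imp (bigConj ((List.finRange (n+1)).map fun i => dia (var i.val)))
    (bigDisj ((offDiag (n+1)).map fun p =>
      dia (andf (var p.1.val) (orf (var p.2.val) (dia (var p.2.val))))))

/-- `bw^-_n`. -/
def bwm (n : ℕ) : TForm :=
  TForm.imp (bigConj ((List.finRange (n+1)).map fun i => TForm.bdia (var i.val)))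
    (bigDisj ((offDiag (n+1)).map fun p =>
      TForm.bdia (andf (var p.1.val) (orf (var p.2.val) (TForm.bdia (var p.2.val))))))

/-- `bd_n` (with `bd_0 := ⊤`, unused). -/
def bd : ℕ → TForm
  | 0 => TForm.top
  | 1 => TForm.imp (dia (box (var 0))) (var 0)
  | k+2 => TForm.imp (dia (andf (box (var (k+1))) (neg (bd (k+1))))) (var (k+1))

/-- Every strict chain inside `R[x]` has length at most `n` (`dep(x) ≤ n`). -/
def depLe {X : Type*} (R : X → X → Prop) (x : X) (n : ℕ) : Prop :=
  ∀ (m : ℕ) (c : Fin m → X), (∀ i, R x (c i)) →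
    (∀ i j : Fin m, i < j → R (c i) (c j) ∧ ¬ R (c j) (c i)) → m ≤ n

/-- Every antichain inside `R[x]` has size at most `n` (`wid^+(x) ≤ n`). -/
def widPlusLe {X : Type*} (R : X → X → Prop) (x : X) (n : ℕ) : Prop :=
  ∀ (m : ℕ) (c : Fin m → X), Function.Injective c → (∀ i, R x (c i)) →
    (∀ i j : Fin m, i ≠ j → ¬ R (c i) (c j)) → m ≤ n

/-- `wid^-(x) ≤ n`. -/
def widMinusLe {X : Type*} (R : X → X → Prop) (x : X) (n : ℕ) : Prop :=
  widPlusLe (flip R) x n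

/-- `zdg(x) ≤ n`. -/
def zdgLe {X : Type*} (R : X → X → Prop) (x : X) (n : ℕ) : Prop :=
  rsharp R n x = rsharpOmega R x

/-! ## Axiomatically presented logics -/

/-- The least tense logic containing `Γ` (i.e. `K_t ⊕ Γ`). -/
def TLogicGen (Γ : Set TForm) : Set TForm := ⋂₀ {L : Set TForm | TenseLogic L ∧ Γ ⊆ L}

def axT : TForm := TForm.imp (box (var 0)) (var 0)

def ax4 : TForm := TForm.imp (box (var 0)) (box (box (var 0)))

/-- `S4_t`. -/
def S4t : Set TForm := TLogicGen {axT, ax4}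

/-- `S4BP^{k,l}_{n,m}` with all parameters finite. -/
def S4BPfin (k l n m : ℕ) : Set TForm := TLogicGen {axT, ax4, bd k, bz l, bwp n, bwm m}

/-- `S4BP^{k,ω}_{n,m}` (no bound on z-degree: `bz_ω = ⊤`). -/
def S4BPko (k n m : ℕ) : Set TForm := TLogicGen {axT, ax4, bd k, bwp n, bwm m}

/-- `S4.3_t = S4BP^{ω,1}_{1,1}`. -/
def S43t : Set TForm := TLogicGen {axT, ax4, bz 1, bwp 1, bwm 1}

/-- `S4BP^{2,ω}_{2,2}`. -/
def S4BP2w22 : Set TForm := TLogicGen {axT, ax4, bd 2, bwp 2, bwm 2}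

/-- `S4BP^{2,ω}_{2,3}`. -/
def S4BP2w23 : Set TForm := TLogicGen {axT, ax4, bd 2, bwp 2, bwm 3}

/-- `S5_t = S4_t ⊕ (◇p → □◇p)`. -/
def S5t : Set TForm := TLogicGen {axT, ax4, TForm.imp (dia (var 0)) (box (dia (var 0)))}

/-- Kripke completeness: `L` is the logic of the class of Kripke frames validating `L`. -/
def KripkeComplete (L : Set TForm) : Prop :=
  L = {φ | ∀ (X : Type) (R : X → X → Prop), Nonempty X → (∀ ψ ∈ L, Valid R ψ) → Valid R φ}

/-- The finite model property: `L` is the logic of the class of finite frames validating `L`. -/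
def HasFMP (L : Set TForm) : Prop :=
  L = {φ | ∀ (X : Type) (R : X → X → Prop), Finite X → Nonempty X →
        (∀ ψ ∈ L, Valid R ψ) → Valid R φ}

/-! ## Skeletons and pre-skeletons -/

/-- A skeleton: a preorder frame all of whose clusters are singletons. -/
def IsSkeleton {X : Type*} (R : X → X → Prop) : Prop :=
  Reflexive R ∧ Transitive R ∧ ∀ y z : X, R y z → R z y → y = z

/-- Membership in the blown-up cluster `C^x_λ = {x} ∪ N`. -/
def inCl {X N : Type*} (x : X) : X ⊕ N → Prop
  | .inl u => u = x
  | .inr _ => True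

/-- The relation of the pre-skeleton `𝔉^x_λ`, where the fresh points are indexed by `N`:
`R ∪ (C^x_λ × R[x]) ∪ (R̆[x] × C^x_λ) ∪ (C^x_λ × C^x_λ)`. -/
def preRel {X : Type*} (N : Type*) (R : X → X → Prop) (x : X) : X ⊕ N → X ⊕ N → Prop :=
  fun a b =>
    (∃ u v, a = Sum.inl u ∧ b = Sum.inl v ∧ R u v) ∨
    (inCl x a ∧ ∃ v, b = Sum.inl v ∧ R x v) ∨
    (inCl x b ∧ ∃ u, a = Sum.inl u ∧ R u x) ∨
    (inCl x a ∧ inCl x b)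

/-- c-irreducibility of the pre-skeleton `𝔉^x_1`: every t-morphic image of `𝔉^x_1` is
isomorphic to `𝔉^x_1` or is a t-morphic image of `𝔉`. -/
def CIrrOne {X : Type} (R : X → X → Prop) (x : X) : Prop :=
  ∀ (Y : Type) (S : Y → Y → Prop),
    (∃ f : X ⊕ Fin 1 → Y, Function.Surjective f ∧ IsTMorphism (preRel (Fin 1) R x) S f) →
    ((∃ g : X ⊕ Fin 1 → Y, Function.Bijective g ∧ IsTMorphism (preRel (Fin 1) R x) S g) ∨
     (∃ h : X → Y, Function.Surjective h ∧ IsTMorphism R S h))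

/-- c-irreducibility of the pre-skeleton `𝔉^x_ω`: every t-morphic image of `𝔉^x_ω` is
isomorphic to `𝔉^x_m` for some `0 < m ≤ ω` or is a t-morphic image of `𝔉`. -/
def CIrrOmega {X : Type} (R : X → X → Prop) (x : X) : Prop :=
  ∀ (Y : Type) (S : Y → Y → Prop),
    (∃ f : X ⊕ ℕ → Y, Function.Surjective f ∧ IsTMorphism (preRel ℕ R x) S f) →
    ((∃ m : ℕ, 0 < m ∧ ∃ g : X ⊕ Fin m → Y, Function.Bijective g ∧
        IsTMorphism (preRel (Fin m) R x) S g) ∨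
     (∃ g : X ⊕ ℕ → Y, Function.Bijective g ∧ IsTMorphism (preRel ℕ R x) S g) ∨
     (∃ h : X → Y, Function.Surjective h ∧ IsTMorphism R S h))

/-! ## Chains, garlands -/

/-- The chain `𝔠_n = ({0,…,n-1}, ≥)`. -/
def chainR (n : ℕ) : Fin n → Fin n → Prop := fun i j => j ≤ i

/-- `L^↑ = ⋂_{n ≥ 1} Log(𝔠_n)`, the tense logic of all finite chains. -/
def Lup : Set TForm := ⋂ n : ℕ, FrameLog (chainR (n+1))

def Lcirc : Set TForm := FrameLog (preRel ℕ (chainR 1) (0 : Fin 1))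

def Lplus : Set TForm := FrameLog (preRel ℕ (chainR 2) (1 : Fin 2))

def Lminus : Set TForm := FrameLog (preRel ℕ (chainR 2) (0 : Fin 2))

def Lpm : Set TForm := FrameLog (preRel ℕ (chainR 3) (1 : Fin 3))

/-- The frame `𝔊_ℤ`. -/
def Rz : ℤ → ℤ → Prop := fun i j => i = j ∨ (Odd i ∧ (j = i - 1 ∨ j = i + 1))

/-- `Ga = Log(𝔊_ℤ)`. -/
def Ga : Set TForm := FrameLog Rz

/-- The garland `𝔊_n` on `{0,…,n}`. -/
def garR (n : ℕ) : Fin (n+1) → Fin (n+1) → Prop :=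
  fun i j => i = j ∨ (Odd (i : ℕ) ∧ ((j : ℕ) + 1 = (i : ℕ) ∨ (j : ℕ) = (i : ℕ) + 1))

/-! ## Generalized Thue–Morse sequences -/

/-- Endpoints `(lo, hi)` of the domain of the stage-`k` approximation `χ^f_k`. -/
def tmBnd : ℕ → ℤ × ℤ
  | 0 => (0, 2)
  | k+1 =>
      let ab := tmBnd k
      if k % 2 = 0 then (ab.1, ab.2 + (ab.2 - ab.1 + 1) + 1)
      else (ab.1 - (ab.2 - ab.1 + 1) - 1, ab.2)

/-- Value of the stage-`k` approximation `χ^f_k` (junk outside its domain). -/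
def tmVal (f : ℕ → Bool) : ℕ → ℤ → Bool
  | 0, j => decide (j = 2)
  | k+1, j =>
      let a := (tmBnd k).1
      let b := (tmBnd k).2
      if k % 2 = 0 then
        if j ≤ b then tmVal f k j
        else if j = b + 1 then f k
        else ! tmVal f k (j - (b + 2) + a)
      else
        if a ≤ j then tmVal f k j
        else if j = a - 1 then f k
        else ! tmVal f k (j + (b - a + 1) + 1)

/-- The generalized Thue–Morse sequence `χ^f : ℤ → Bool` generated by `f`
(evaluated at a stage whose domain certainly contains the argument). -/
def chi (f : ℕ → Bool) : ℤ → Bool := fun j => tmVal f (2 * j.natAbs + 2) j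

/-- `α` is finitely perfect: for every finite subsequence `β = α↾[c,d]` there is `n ∈ ω`
such that `β` embeds into every finite subsequence `ζ = α↾[c',d']` with `|dom ζ| > n`. -/
def FinitelyPerfect (α : ℤ → Bool) : Prop :=
  ∀ c d : ℤ, ∃ n : ℕ, ∀ c' d' : ℤ, (n : ℤ) < d' - c' + 1 →
    ∃ s : ℤ, c' ≤ c + s ∧ d + s ≤ d' ∧ ∀ j : ℤ, c ≤ j → j ≤ d → α j = α (j + s)

namespace TM18

def Lq : ℕ → ℤ
  | 0 => 0
  | i+1 => 4 * Lq i + 2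

def Rq : ℕ → ℤ
  | 0 => 0
  | i+1 => 4 * Rq i + 1

lemma Lq_zero : Lq 0 = 0 := rfl
lemma Rq_zero : Rq 0 = 0 := rfl
lemma Lq_rec (i : ℕ) : Lq (i+1) = 4 * Lq i + 2 := rfl
lemma Rq_rec (i : ℕ) : Rq (i+1) = 4 * Rq i + 1 := rfl

lemma Lq_nonneg (i : ℕ) : 0 ≤ Lq i := by
  induction i with
  | zero => simp [Lq_zero]
  | succ i ih => rw [Lq_rec]; omega

lemma Rq_nonneg (i : ℕ) : 0 ≤ Rq i := by
  induction i with
  | zero => simp [Rq_zero]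
  | succ i ih => rw [Rq_rec]; omega

lemma Rq3 (i : ℕ) : 3 * Rq i + 1 = 4 ^ i := by
  induction i with
  | zero => rfl
  | succ i ih => rw [Rq_rec, pow_succ]; omega

lemma Lq3 (i : ℕ) : 3 * Lq i + 2 = 2 * 4 ^ i := by
  induction i with
  | zero => rfl
  | succ i ih => rw [Lq_rec, pow_succ]; omega

lemma RL (i : ℕ) : Rq i + Lq i + 1 = 4 ^ i := by
  have := Rq3 i; have := Lq3 i; omega

lemma pow4_pos (i : ℕ) : (0:ℤ) < 4 ^ i := by positivity

lemma Rq_succ (i : ℕ) : Rq (i+1) = Rq i + 4 ^ i := by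
  have := Rq3 i; rw [Rq_rec]; omega

lemma Lq_succ (i : ℕ) : Lq (i+1) = Lq i + 2 * 4 ^ i := by
  have := Lq3 i; rw [Lq_rec]; omega

lemma Lq_ge (i : ℕ) : (i : ℤ) ≤ Lq i := by
  induction i with
  | zero => simp [Lq_zero]
  | succ i ih => rw [Lq_rec]; push_cast; omega

lemma Rq_ge (i : ℕ) : (i : ℤ) ≤ Rq i := by
  induction i with
  | zero => simp [Rq_zero]
  | succ i ih => rw [Rq_rec]; push_cast; omega

lemma Lq_mono (i : ℕ) : Lq i ≤ Lq (i+1) := by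
  have := Lq_nonneg i; rw [Lq_rec]; omega

lemma Rq_mono (i : ℕ) : Rq i ≤ Rq (i+1) := by
  have := Rq_nonneg i; rw [Rq_rec]; omega

lemma tmBnd_closed : ∀ i, tmBnd (2*i) = (-4 * Lq i, 4 * Rq i + 2) ∧
    tmBnd (2*i+1) = (-4 * Lq i, 4 * Rq (i+1) + 2) := by
  intro i
  induction i with
  | zero =>
    refine ⟨rfl, ?_⟩
    show tmBnd (0+1) = _
    rw [tmBnd]
    norm_num [tmBnd]
    rw [Lq_zero, Rq_rec, Rq_zero]
    constructor <;> rfl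
  | succ i ih =>
    obtain ⟨h1, h2⟩ := ih
    have hRL := RL i
    have hL := Lq_succ i; have hR := Rq_succ i
    have h4 : (4:ℤ)^(i+1) = 4 * 4^i := by rw [pow_succ]; ring
    have key : tmBnd (2*(i+1)) = (-4 * Lq (i+1), 4 * Rq (i+1) + 2) := by
      have e : 2*(i+1) = (2*i+1)+1 := by ring
      rw [e, tmBnd, if_neg (by omega : ¬ (2*i+1) % 2 = 0), h2]
      rw [Prod.mk.injEq]
      refine ⟨by simp only []; omega, rfl⟩
    refine ⟨key, ?_⟩
    rw [show 2*(i+1)+1 = (2*(i+1))+1 from rfl, tmBnd,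
      if_pos (by omega : (2*(i+1)) % 2 = 0), key]
    rw [Prod.mk.injEq]
    have hL2 := Lq_succ (i+1); have hR2 := Rq_succ (i+1)
    have hRL2 := RL (i+1)
    refine ⟨rfl, by simp only []; omega⟩

lemma tmBnd_even (i : ℕ) : tmBnd (2*i) = (-4 * Lq i, 4 * Rq i + 2) := (tmBnd_closed i).1

lemma tmBnd_odd (i : ℕ) : tmBnd (2*i+1) = (-4 * Lq i, 4 * Rq (i+1) + 2) := (tmBnd_closed i).2

lemma bnd_basic (k : ℕ) : (tmBnd k).1 ≤ 0 ∧ 2 ≤ (tmBnd k).2 := by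
  rcases Nat.even_or_odd k with ⟨i, hi⟩ | ⟨i, hi⟩
  · subst hi
    rw [(by omega : i + i = 2*i), tmBnd_even]
    have := Lq_nonneg i; have := Rq_nonneg i
    constructor <;> simp <;> omega
  · subst hi
    rw [tmBnd_odd]
    have := Lq_nonneg i; have := Rq_nonneg i; have := Rq_nonneg (i+1)
    constructor <;> simp <;> omega

lemma bnd_step (k : ℕ) : (tmBnd (k+1)).1 ≤ (tmBnd k).1 ∧ (tmBnd k).2 ≤ (tmBnd (k+1)).2 := by
  have hb := bnd_basic k
  rw [tmBnd]
  rcases Nat.even_or_odd k with h | h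
  · rw [if_pos (Nat.even_iff.mp h)]; constructor <;> simp <;> omega
  · rw [if_neg (by rw [Nat.odd_iff] at h; omega)]; constructor <;> simp <;> omega

lemma bnd_mono {k K : ℕ} (h : k ≤ K) : (tmBnd K).1 ≤ (tmBnd k).1 ∧ (tmBnd k).2 ≤ (tmBnd K).2 := by
  induction K with
  | zero => have : k = 0 := by omega
            subst this; exact ⟨le_refl _, le_refl _⟩
  | succ K ih =>
    rcases Nat.lt_or_ge k (K+1) with h' | h'
    · have := ih (by omega)
      have := bnd_step K
      constructor <;> omega
    · have : k = K + 1 := by omega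
      subst this; exact ⟨le_refl _, le_refl _⟩

lemma tmVal_succ (f : ℕ → Bool) (k : ℕ) (j : ℤ) (h1 : (tmBnd k).1 ≤ j) (h2 : j ≤ (tmBnd k).2) :
    tmVal f (k+1) j = tmVal f k j := by
  rw [tmVal.eq_2]
  rcases Nat.even_or_odd k with h | h
  · rw [if_pos (Nat.even_iff.mp h), if_pos h2]
  · rw [if_neg (by rw [Nat.odd_iff] at h; omega), if_pos h1]

lemma tmVal_stable (f : ℕ → Bool) {k K : ℕ} (h : k ≤ K) (j : ℤ)
    (h1 : (tmBnd k).1 ≤ j) (h2 : j ≤ (tmBnd k).2) : tmVal f K j = tmVal f k j := by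
  induction K with
  | zero => have : k = 0 := by omega
            subst this; rfl
  | succ K ih =>
    rcases Nat.lt_or_ge k (K+1) with h' | h'
    · have hm := bnd_mono (by omega : k ≤ K)
      rw [tmVal_succ f K j (by omega) (by omega)]
      exact ih (by omega)
    · have : k = K + 1 := by omega
      subst this; rfl

lemma chi_eq (f : ℕ → Bool) (k : ℕ) (j : ℤ) (h1 : (tmBnd k).1 ≤ j) (h2 : j ≤ (tmBnd k).2) :
    chi f j = tmVal f k j := by
  have hdom : (tmBnd (2 * j.natAbs + 2)).1 ≤ j ∧ j ≤ (tmBnd (2 * j.natAbs + 2)).2 := by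
    rw [(by ring : 2 * j.natAbs + 2 = 2 * (j.natAbs + 1)), tmBnd_even]
    have hL := Lq_ge (j.natAbs + 1); have hR := Rq_ge (j.natAbs + 1)
    have h1 := Int.le_natAbs (a := j)
    have h2 : -(j.natAbs : ℤ) ≤ j := by rcases Int.natAbs_eq j with h | h <;> omega
    push_cast at *
    refine ⟨by omega, by omega⟩
  have e1 : tmVal f (max k (2 * j.natAbs + 2)) j = tmVal f k j :=
    tmVal_stable f (le_max_left _ _) j h1 h2
  have e2 : tmVal f (max k (2 * j.natAbs + 2)) j = tmVal f (2 * j.natAbs + 2) j :=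
    tmVal_stable f (le_max_right _ _) j hdom.1 hdom.2
  unfold chi
  rw [← e2, e1]

end TM18
namespace TM18

variable (f g : ℕ → Bool)

/-- Within the stage-`2i` domain, shifting right by `4^(i+1)` complements. -/
lemma chiR1 (i : ℕ) (j : ℤ) (h1 : -4 * Lq i ≤ j) (h2 : j ≤ 4 * Rq i + 2) :
    chi f (j + 4^(i+1)) = ! chi f j := by
  have hRL := RL i
  have h4 : (4:ℤ)^(i+1) = 4 * 4^i := by rw [pow_succ]; ring
  have hRs := Rq_succ i
  have e1 : chi f (j + 4^(i+1)) = tmVal f (2*i+1) (j + 4^(i+1)) := by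
    apply chi_eq
    · rw [tmBnd_odd]; simp only []; omega
    · rw [tmBnd_odd]; simp only []; omega
  rw [e1, tmVal.eq_2, if_pos (by omega : (2*i) % 2 = 0), tmBnd_even]
  simp only []
  rw [if_neg (by omega), if_neg (by omega)]
  have e2 : j + 4^(i+1) - (4 * Rq i + 2 + 2) + -4 * Lq i = j := by omega
  rw [e2, ← chi_eq f (2*i) j (by rw [tmBnd_even]; simp only []; omega)
    (by rw [tmBnd_even]; simp only []; omega)]

/-- Right seam value. -/
lemma chiS1 (i : ℕ) : chi f (4 * Rq i + 3) = f (2*i) := by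
  have hRs := Rq_succ i
  have h4 := pow4_pos i
  have hR := Rq_nonneg i; have hL := Lq_nonneg i
  have e1 : chi f (4 * Rq i + 3) = tmVal f (2*i+1) (4 * Rq i + 3) := by
    apply chi_eq
    · rw [tmBnd_odd]; simp only []; omega
    · rw [tmBnd_odd]; simp only []; omega
  rw [e1, tmVal.eq_2, if_pos (by omega : (2*i) % 2 = 0), tmBnd_even]
  simp only []
  rw [if_neg (by omega), if_pos (by omega)]

/-- Within the stage-`2i+1` domain, shifting left by `2 * 4^(i+1)` complements. -/
lemma chiR2 (i : ℕ) (j : ℤ) (h1 : -4 * Lq i ≤ j) (h2 : j ≤ 4 * Rq (i+1) + 2) :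
    chi f (j - 2 * 4^(i+1)) = ! chi f j := by
  have hRL := RL i
  have h4 : (4:ℤ)^(i+1) = 4 * 4^i := by rw [pow_succ]; ring
  have hRs := Rq_succ i
  have hLs := Lq_succ i
  have e1 : chi f (j - 2 * 4^(i+1)) = tmVal f (2*i+1+1) (j - 2 * 4^(i+1)) := by
    apply chi_eq
    · rw [show 2*i+1+1 = 2*(i+1) from by ring, tmBnd_even]; simp only []; omega
    · rw [show 2*i+1+1 = 2*(i+1) from by ring, tmBnd_even]
      have := Rq_nonneg (i+1); have := Lq_nonneg i
      simp only []; omega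
  rw [e1, tmVal.eq_2, if_neg (by omega : ¬ (2*i+1) % 2 = 0), tmBnd_odd]
  simp only []
  rw [if_neg (by omega), if_neg (by omega)]
  have e2 : j - 2 * 4^(i+1) + (4 * Rq (i+1) + 2 - -4 * Lq i + 1) + 1 = j := by omega
  rw [e2, ← chi_eq f (2*i+1) j (by rw [tmBnd_odd]; simp only []; omega)
    (by rw [tmBnd_odd]; simp only []; omega)]

/-- Left seam value. -/
lemma chiS2 (i : ℕ) : chi f (-4 * Lq i - 1) = f (2*i+1) := by
  have hRs := Rq_succ i
  have hLs := Lq_succ i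
  have h4 := pow4_pos i
  have hR := Rq_nonneg (i+1); have hL := Lq_nonneg i
  have e1 : chi f (-4 * Lq i - 1) = tmVal f (2*i+1+1) (-4 * Lq i - 1) := by
    apply chi_eq
    · rw [show 2*i+1+1 = 2*(i+1) from by ring, tmBnd_even]; simp only []; omega
    · rw [show 2*i+1+1 = 2*(i+1) from by ring, tmBnd_even]; simp only []; omega
  rw [e1, tmVal.eq_2, if_neg (by omega : ¬ (2*i+1) % 2 = 0), tmBnd_odd]
  simp only []
  rw [if_neg (by omega)]
  split_ifs with h
  · rfl
  · exact absurd trivial h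

/-- Within the stage-`2i` domain, shifting left by `4^(i+1)` preserves values. -/
lemma chiR3 (i : ℕ) (j : ℤ) (h1 : -4 * Lq i ≤ j) (h2 : j ≤ 4 * Rq i + 2) :
    chi f (j - 4^(i+1)) = chi f j := by
  have hRs := Rq_succ i
  have h4 : (4:ℤ)^(i+1) = 4 * 4^i := by rw [pow_succ]; ring
  have h4p := pow4_pos i
  have e : j - 4^(i+1) = (j + 4^(i+1)) - 2 * 4^(i+1) := by ring
  rw [e, chiR2 f i (j + 4^(i+1)) (by omega) (by omega), chiR1 f i j h1 h2, Bool.not_not]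

lemma chi_zero : chi f 0 = false := by
  rw [chi_eq f 0 0 (by norm_num [tmBnd]) (by norm_num [tmBnd])]
  rfl

lemma chi_one : chi f 1 = false := by
  rw [chi_eq f 0 1 (by norm_num [tmBnd]) (by norm_num [tmBnd])]
  rfl

lemma chi_two : chi f 2 = true := by
  rw [chi_eq f 0 2 (by norm_num [tmBnd]) (by norm_num [tmBnd])]
  rfl

/-- Block values. -/
def Bc (f : ℕ → Bool) (m : ℤ) : Bool := chi f (4*m)

/-- Control values. -/
def Cc (f : ℕ → Bool) (m : ℤ) : Bool := chi f (4*m+3)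

lemma B_add (i : ℕ) (m : ℤ) (h1 : -Lq i ≤ m) (h2 : m ≤ Rq i) :
    Bc f (m + 4^i) = ! Bc f m := by
  unfold Bc
  have e : 4 * (m + 4^i) = 4*m + 4^(i+1) := by rw [pow_succ]; ring
  rw [e, chiR1 f i (4*m) (by omega) (by omega)]

lemma B_sub (i : ℕ) (m : ℤ) (h1 : -Lq i ≤ m) (h2 : m ≤ Rq i) :
    Bc f (m - 4^i) = Bc f m := by
  unfold Bc
  have e : 4 * (m - 4^i) = 4*m - 4^(i+1) := by rw [pow_succ]; ring
  rw [e, chiR3 f i (4*m) (by omega) (by omega)]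

lemma B_sub2 (i : ℕ) (m : ℤ) (h1 : -Lq i ≤ m) (h2 : m ≤ Rq i + 4^i) :
    Bc f (m - 2 * 4^i) = ! Bc f m := by
  unfold Bc
  have hRs := Rq_succ i
  have e : 4 * (m - 2 * 4^i) = 4*m - 2 * 4^(i+1) := by rw [pow_succ]; ring
  rw [e, chiR2 f i (4*m) (by omega) (by omega)]

lemma C_add (i : ℕ) (m : ℤ) (h1 : -Lq i ≤ m) (h2 : m ≤ Rq i - 1) :
    Cc f (m + 4^i) = ! Cc f m := by
  unfold Cc
  have e : 4 * (m + 4^i) + 3 = (4*m+3) + 4^(i+1) := by rw [pow_succ]; ring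
  rw [e, chiR1 f i (4*m+3) (by omega) (by omega)]

lemma C_sub (i : ℕ) (m : ℤ) (h1 : -Lq i ≤ m) (h2 : m ≤ Rq i - 1) :
    Cc f (m - 4^i) = Cc f m := by
  unfold Cc
  have e : 4 * (m - 4^i) + 3 = (4*m+3) - 4^(i+1) := by rw [pow_succ]; ring
  rw [e, chiR3 f i (4*m+3) (by omega) (by omega)]

lemma C_sub2 (i : ℕ) (m : ℤ) (h1 : -Lq i ≤ m) (h2 : m ≤ Rq i + 4^i - 1) :
    Cc f (m - 2 * 4^i) = ! Cc f m := by
  unfold Cc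
  have hRs := Rq_succ i
  have e : 4 * (m - 2 * 4^i) + 3 = (4*m+3) - 2 * 4^(i+1) := by rw [pow_succ]; ring
  rw [e, chiR2 f i (4*m+3) (by omega) (by omega)]

lemma C_seamR (i : ℕ) : Cc f (Rq i) = f (2*i) := by
  unfold Cc
  rw [show 4 * Rq i + 3 = 4 * Rq i + 3 from rfl, chiS1]

lemma C_seamL (i : ℕ) : Cc f (-Lq i - 1) = f (2*i+1) := by
  unfold Cc
  rw [show 4 * (-Lq i - 1) + 3 = -4 * Lq i - 1 from by ring, chiS2]

lemma B_zero : Bc f 0 = false := by unfold Bc; rw [show (4:ℤ)*0 = 0 from by ring, chi_zero]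

end TM18
namespace TM18

variable (f g : ℕ → Bool)

lemma exists_lvl (m : ℤ) : ∃ i, -Lq i ≤ m ∧ m ≤ Rq i := by
  refine ⟨m.natAbs + 1, ?_, ?_⟩
  · have h1 := Lq_ge (m.natAbs + 1)
    have h2 : -(m.natAbs : ℤ) ≤ m := by rcases Int.natAbs_eq m with h | h <;> omega
    push_cast at *; omega
  · have h1 := Rq_ge (m.natAbs + 1)
    have h2 := Int.le_natAbs (a := m)
    push_cast at *; omega

lemma classify (i : ℕ) (m : ℤ) (h1 : -Lq (i+1) ≤ m) (h2 : m ≤ Rq (i+1)) :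
    (-Lq i ≤ m ∧ m ≤ Rq i) ∨ (-Lq i ≤ m - 4^i ∧ m - 4^i ≤ Rq i) ∨
    (-Lq i ≤ m + 4^i ∧ m + 4^i ≤ Rq i) ∨ (-Lq i ≤ m + 2 * 4^i ∧ m + 2 * 4^i ≤ Rq i) := by
  have := RL i; have := Rq_succ i; have := Lq_succ i
  have := Lq_nonneg i; have := Rq_nonneg i; have := pow4_pos i
  omega

lemma B_ext_aux : ∀ (i : ℕ) (m : ℤ), -Lq i ≤ m → m ≤ Rq i → Bc f m = Bc g m := by
  intro i
  induction i with
  | zero =>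
    intro m h1 h2
    have hm : m = 0 := by rw [Lq_zero] at h1; rw [Rq_zero] at h2; omega
    subst hm; rw [B_zero, B_zero]
  | succ i ih =>
    intro m h1 h2
    rcases classify i m h1 h2 with ⟨a,b⟩ | ⟨a,b⟩ | ⟨a,b⟩ | ⟨a,b⟩
    · exact ih m a b
    · have e : m = (m - 4^i) + 4^i := by ring
      rw [e, B_add f i _ a b, B_add g i _ a b, ih _ a b]
    · have e : m = (m + 4^i) - 4^i := by ring
      rw [e, B_sub f i _ a b, B_sub g i _ a b, ih _ a b]
    · have e : m = (m + 2*4^i) - 2*(4^i) := by ring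
      have hb : m + 2*4^i ≤ Rq i + 4^i := by have := pow4_pos i; omega
      rw [e, B_sub2 f i _ a hb, B_sub2 g i _ a hb, ih _ a b]

/-- The block sequence does not depend on `f`. -/
lemma B_ext (m : ℤ) : Bc f m = Bc g m := by
  obtain ⟨i, hi1, hi2⟩ := exists_lvl m
  exact B_ext_aux f g i m hi1 hi2

end TM18
namespace TM18

variable (f g : ℕ → Bool)

lemma J_aux : ∀ (i : ℕ) (p : ℤ), -Lq i ≤ p → p ≤ Rq i →
    Bc f (4*p) = Bc f p ∧ Bc f (4*p+1) = ! Bc f p ∧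
    Bc f (4*p-1) = Bc f p ∧ Bc f (4*p-2) = ! Bc f p := by
  intro i
  induction i with
  | zero =>
    intro p h1 h2
    have hp : p = 0 := by rw [Lq_zero] at h1; rw [Rq_zero] at h2; omega
    subst hp
    have hL0 : -Lq 0 ≤ (0:ℤ) := by rw [Lq_zero]; norm_num
    have hR0 : (0:ℤ) ≤ Rq 0 := by rw [Rq_zero]
    have hadd := B_add f 0 0 hL0 hR0
    have hsub := B_sub f 0 0 hL0 hR0
    have hsub2 := B_sub2 f 0 0 hL0 (by rw [Rq_zero]; norm_num)
    norm_num at hadd hsub hsub2 ⊢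
    exact ⟨hadd, hsub, hsub2⟩
  | succ i ih =>
    intro p h1 h2
    have hLr := Lq_rec i; have hRr := Rq_rec i
    have hpow : (4:ℤ)^(i+1) = 4 * 4^i := by rw [pow_succ]; ring
    rcases classify i p h1 h2 with ⟨a,b⟩ | ⟨a,b⟩ | ⟨a,b⟩ | ⟨a,b⟩
    · exact ih p a b
    · -- p = p' + 4^i, p' = p - 4^i
      obtain ⟨j0, j1, j2, j3⟩ := ih (p - 4^i) a b
      have hp : Bc f p = ! Bc f (p - 4^i) := by
        have h := B_add f i (p - 4^i) a b
        rwa [show p - 4^i + 4^i = p from by ring] at h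
      have k0 : Bc f (4*p) = ! Bc f (4*(p - 4^i)) := by
        rw [show 4*p = (4*(p - 4^i)) + 4^(i+1) from by rw [hpow]; ring]
        exact B_add f (i+1) _ (by omega) (by omega)
      have k1 : Bc f (4*p+1) = ! Bc f (4*(p - 4^i)+1) := by
        rw [show 4*p+1 = (4*(p - 4^i)+1) + 4^(i+1) from by rw [hpow]; ring]
        exact B_add f (i+1) _ (by omega) (by omega)
      have k2 : Bc f (4*p-1) = ! Bc f (4*(p - 4^i)-1) := by
        rw [show 4*p-1 = (4*(p - 4^i)-1) + 4^(i+1) from by rw [hpow]; ring]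
        exact B_add f (i+1) _ (by omega) (by omega)
      have k3 : Bc f (4*p-2) = ! Bc f (4*(p - 4^i)-2) := by
        rw [show 4*p-2 = (4*(p - 4^i)-2) + 4^(i+1) from by rw [hpow]; ring]
        exact B_add f (i+1) _ (by omega) (by omega)
      rw [k0, k1, k2, k3, j0, j1, j2, j3, hp]
      simp
    · -- p = p' - 4^i, p' = p + 4^i
      obtain ⟨j0, j1, j2, j3⟩ := ih (p + 4^i) a b
      have hp : Bc f p = Bc f (p + 4^i) := by
        have h := B_sub f i (p + 4^i) a b
        rwa [show p + 4^i - 4^i = p from by ring] at h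
      have k0 : Bc f (4*p) = Bc f (4*(p + 4^i)) := by
        rw [show 4*p = (4*(p + 4^i)) - 4^(i+1) from by rw [hpow]; ring]
        exact B_sub f (i+1) _ (by omega) (by omega)
      have k1 : Bc f (4*p+1) = Bc f (4*(p + 4^i)+1) := by
        rw [show 4*p+1 = (4*(p + 4^i)+1) - 4^(i+1) from by rw [hpow]; ring]
        exact B_sub f (i+1) _ (by omega) (by omega)
      have k2 : Bc f (4*p-1) = Bc f (4*(p + 4^i)-1) := by
        rw [show 4*p-1 = (4*(p + 4^i)-1) - 4^(i+1) from by rw [hpow]; ring]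
        exact B_sub f (i+1) _ (by omega) (by omega)
      have k3 : Bc f (4*p-2) = Bc f (4*(p + 4^i)-2) := by
        rw [show 4*p-2 = (4*(p + 4^i)-2) - 4^(i+1) from by rw [hpow]; ring]
        exact B_sub f (i+1) _ (by omega) (by omega)
      rw [k0, k1, k2, k3, j0, j1, j2, j3, hp]
      exact ⟨rfl, rfl, rfl, rfl⟩
    · -- p = p' - 2*4^i, p' = p + 2*4^i
      have hpw := pow4_pos i
      obtain ⟨j0, j1, j2, j3⟩ := ih (p + 2*4^i) a b
      have hp : Bc f p = ! Bc f (p + 2*4^i) := by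
        have h := B_sub2 f i (p + 2*4^i) a (by omega)
        rwa [show p + 2*4^i - 2*4^i = p from by ring] at h
      have k0 : Bc f (4*p) = ! Bc f (4*(p + 2*4^i)) := by
        rw [show 4*p = (4*(p + 2*4^i)) - 2*4^(i+1) from by rw [hpow]; ring]
        exact B_sub2 f (i+1) _ (by omega) (by omega)
      have k1 : Bc f (4*p+1) = ! Bc f (4*(p + 2*4^i)+1) := by
        rw [show 4*p+1 = (4*(p + 2*4^i)+1) - 2*4^(i+1) from by rw [hpow]; ring]
        exact B_sub2 f (i+1) _ (by omega) (by omega)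
      have k2 : Bc f (4*p-1) = ! Bc f (4*(p + 2*4^i)-1) := by
        rw [show 4*p-1 = (4*(p + 2*4^i)-1) - 2*4^(i+1) from by rw [hpow]; ring]
        exact B_sub2 f (i+1) _ (by omega) (by omega)
      have k3 : Bc f (4*p-2) = ! Bc f (4*(p + 2*4^i)-2) := by
        rw [show 4*p-2 = (4*(p + 2*4^i)-2) - 2*4^(i+1) from by rw [hpow]; ring]
        exact B_sub2 f (i+1) _ (by omega) (by omega)
      rw [k0, k1, k2, k3, j0, j1, j2, j3, hp]
      simp

lemma J0 (p : ℤ) : Bc f (4*p) = Bc f p := by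
  obtain ⟨i, h1, h2⟩ := exists_lvl p; exact (J_aux f i p h1 h2).1
lemma J1 (p : ℤ) : Bc f (4*p+1) = ! Bc f p := by
  obtain ⟨i, h1, h2⟩ := exists_lvl p; exact (J_aux f i p h1 h2).2.1
lemma J2 (p : ℤ) : Bc f (4*p-1) = Bc f p := by
  obtain ⟨i, h1, h2⟩ := exists_lvl p; exact (J_aux f i p h1 h2).2.2.1
lemma J3 (p : ℤ) : Bc f (4*p-2) = ! Bc f p := by
  obtain ⟨i, h1, h2⟩ := exists_lvl p; exact (J_aux f i p h1 h2).2.2.2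

/-- No three consecutive equal blocks. -/
lemma B_no3 (p : ℤ) : ¬ (Bc f p = Bc f (p+1) ∧ Bc f (p+1) = Bc f (p+2)) := by
  rintro ⟨e1, e2⟩
  obtain ⟨q, r, hr1, hr2, hpq⟩ : ∃ (q r : ℤ), -2 ≤ r ∧ r ≤ 1 ∧ p = 4*q + r :=
    ⟨(p+2)/4, p - 4*((p+2)/4), by omega, by omega, by ring⟩
  interval_cases r
  · rw [show p = 4*q-2 from by omega] at e1
    rw [show 4*q-2+1 = 4*q-1 from by ring] at e1
    rw [J3, J2] at e1
    simp at e1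
  · rw [show p = 4*q-1 from by omega] at e2
    rw [show 4*q-1+1 = 4*q from by ring, show 4*q-1+2 = 4*q+1 from by ring] at e2
    rw [J0, J1] at e2
    simp at e2
  · rw [show p = 4*q from by omega] at e1
    rw [J0, J1] at e1
    simp at e1
  · rw [show p = 4*q+1 from by omega] at e2
    rw [show 4*q+1+1 = 4*(q+1)-2 from by ring, show 4*q+1+2 = 4*(q+1)-1 from by ring] at e2
    rw [J3, J2] at e2
    simp at e2

end TM18
namespace TM18

variable (f g : ℕ → Bool)

lemma K_aux : ∀ (i : ℕ) (m : ℤ), -Lq i ≤ m → m ≤ Rq i →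
    chi f (4*m+1) = chi f (4*m) ∧ chi f (4*m+2) = ! chi f (4*m) := by
  intro i
  induction i with
  | zero =>
    intro m h1 h2
    have hm : m = 0 := by rw [Lq_zero] at h1; rw [Rq_zero] at h2; omega
    subst hm
    norm_num [chi_zero, chi_one, chi_two]
  | succ i ih =>
    intro m h1 h2
    have hLr := Lq_rec i; have hRr := Rq_rec i
    have hpow : (4:ℤ)^(i+1) = 4 * 4^i := by rw [pow_succ]; ring
    have hLn := Lq_nonneg i; have hRn := Rq_nonneg i
    rcases classify i m h1 h2 with ⟨a,b⟩ | ⟨a,b⟩ | ⟨a,b⟩ | ⟨a,b⟩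
    · exact ih m a b
    · obtain ⟨j1, j2⟩ := ih (m - 4^i) a b
      have k0 : chi f (4*m) = ! chi f (4*(m - 4^i)) := by
        have h := chiR1 f i (4*(m - 4^i)) (by omega) (by omega)
        rwa [show 4*(m - 4^i) + 4^(i+1) = 4*m from by rw [hpow]; ring] at h
      have k1 : chi f (4*m+1) = ! chi f (4*(m - 4^i)+1) := by
        have h := chiR1 f i (4*(m - 4^i)+1) (by omega) (by omega)
        rwa [show 4*(m - 4^i)+1 + 4^(i+1) = 4*m+1 from by rw [hpow]; ring] at h
      have k2 : chi f (4*m+2) = ! chi f (4*(m - 4^i)+2) := by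
        have h := chiR1 f i (4*(m - 4^i)+2) (by omega) (by omega)
        rwa [show 4*(m - 4^i)+2 + 4^(i+1) = 4*m+2 from by rw [hpow]; ring] at h
      rw [k0, k1, k2, j1, j2]
      simp
    · obtain ⟨j1, j2⟩ := ih (m + 4^i) a b
      have k0 : chi f (4*m) = chi f (4*(m + 4^i)) := by
        have h := chiR3 f i (4*(m + 4^i)) (by omega) (by omega)
        rwa [show 4*(m + 4^i) - 4^(i+1) = 4*m from by rw [hpow]; ring] at h
      have k1 : chi f (4*m+1) = chi f (4*(m + 4^i)+1) := by
        have h := chiR3 f i (4*(m + 4^i)+1) (by omega) (by omega)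
        rwa [show 4*(m + 4^i)+1 - 4^(i+1) = 4*m+1 from by rw [hpow]; ring] at h
      have k2 : chi f (4*m+2) = chi f (4*(m + 4^i)+2) := by
        have h := chiR3 f i (4*(m + 4^i)+2) (by omega) (by omega)
        rwa [show 4*(m + 4^i)+2 - 4^(i+1) = 4*m+2 from by rw [hpow]; ring] at h
      rw [k0, k1, k2, j1, j2]
      exact ⟨rfl, rfl⟩
    · obtain ⟨j1, j2⟩ := ih (m + 2*4^i) a b
      have k0 : chi f (4*m) = ! chi f (4*(m + 2*4^i)) := by
        have h := chiR2 f i (4*(m + 2*4^i)) (by omega) (by omega)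
        rwa [show 4*(m + 2*4^i) - 2*4^(i+1) = 4*m from by rw [hpow]; ring] at h
      have k1 : chi f (4*m+1) = ! chi f (4*(m + 2*4^i)+1) := by
        have h := chiR2 f i (4*(m + 2*4^i)+1) (by omega) (by omega)
        rwa [show 4*(m + 2*4^i)+1 - 2*4^(i+1) = 4*m+1 from by rw [hpow]; ring] at h
      have k2 : chi f (4*m+2) = ! chi f (4*(m + 2*4^i)+2) := by
        have h := chiR2 f i (4*(m + 2*4^i)+2) (by omega) (by omega)
        rwa [show 4*(m + 2*4^i)+2 - 2*4^(i+1) = 4*m+2 from by rw [hpow]; ring] at h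
      rw [k0, k1, k2, j1, j2]
      simp

lemma K1 (m : ℤ) : chi f (4*m+1) = chi f (4*m) := by
  obtain ⟨i, h1, h2⟩ := exists_lvl m; exact (K_aux f i m h1 h2).1

lemma K2 (m : ℤ) : chi f (4*m+2) = ! chi f (4*m) := by
  obtain ⟨i, h1, h2⟩ := exists_lvl m; exact (K_aux f i m h1 h2).2

end TM18
namespace TM18

variable (f g : ℕ → Bool)

lemma xor_not (a b : Bool) : xor a (!b) = !(xor a b) := by cases a <;> cases b <;> rfl
lemma xor_false' (a : Bool) : xor a false = a := by cases a <;> rfl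

lemma T1_aux : ∀ (i : ℕ) (m : ℤ), -Lq (i+1) ≤ m → m ≤ Rq (i+1) → 2 ∣ m →
    Cc f m = xor (f 0) (Bc f m) := by
  intro i
  induction i with
  | zero =>
    intro m h1 h2 hpar
    rw [Lq_rec, Lq_zero] at h1
    rw [Rq_rec, Rq_zero] at h2
    have hm : m = -2 ∨ m = 0 := by omega
    have hL0 : -Lq 0 ≤ (0:ℤ) := by rw [Lq_zero]; norm_num
    have hR0 : (0:ℤ) ≤ Rq 0 := by rw [Rq_zero]
    rcases hm with hm | hm <;> subst hm
    · have hC := C_sub2 f 0 0 hL0 (by rw [Rq_zero]; norm_num)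
      have hB := B_sub2 f 0 0 hL0 (by rw [Rq_zero]; norm_num)
      norm_num at hC hB
      have hs : Cc f 0 = f 0 := by
        have := C_seamR f 0; rwa [Rq_zero, Nat.mul_zero] at this
      rw [hC, hB, hs, B_zero, xor_not, xor_false']
    · have hs : Cc f 0 = f 0 := by
        have := C_seamR f 0; rwa [Rq_zero, Nat.mul_zero] at this
      rw [hs, B_zero, xor_false']
  | succ i ih =>
    intro m h1 h2 hpar
    have hLr := Lq_rec (i+1); have hRr := Rq_rec (i+1)
    have hLr' := Lq_rec i; have hRr' := Rq_rec i
    have hpw := pow4_pos (i+1)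
    rcases classify (i+1) m h1 h2 with ⟨a,b⟩ | ⟨a,b⟩ | ⟨a,b⟩ | ⟨a,b⟩
    · exact ih m a b hpar
    · have hpar' : (2:ℤ) ∣ m - 4^(i+1) := by
        rw [pow_succ]; omega
      have hC : Cc f m = ! Cc f (m - 4^(i+1)) := by
        have h := C_add f (i+1) (m - 4^(i+1)) a (by omega)
        rwa [show m - 4^(i+1) + 4^(i+1) = m from by ring] at h
      have hB : Bc f m = ! Bc f (m - 4^(i+1)) := by
        have h := B_add f (i+1) (m - 4^(i+1)) a b
        rwa [show m - 4^(i+1) + 4^(i+1) = m from by ring] at h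
      rw [hC, hB, ih _ a b hpar', xor_not]
    · have hpar' : (2:ℤ) ∣ m + 4^(i+1) := by
        rw [pow_succ]; omega
      have hC : Cc f m = Cc f (m + 4^(i+1)) := by
        have h := C_sub f (i+1) (m + 4^(i+1)) a (by omega)
        rwa [show m + 4^(i+1) - 4^(i+1) = m from by ring] at h
      have hB : Bc f m = Bc f (m + 4^(i+1)) := by
        have h := B_sub f (i+1) (m + 4^(i+1)) a b
        rwa [show m + 4^(i+1) - 4^(i+1) = m from by ring] at h
      rw [hC, hB, ih _ a b hpar']
    · have hpar' : (2:ℤ) ∣ m + 2*4^(i+1) := by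
        rw [pow_succ]; omega
      have hC : Cc f m = ! Cc f (m + 2*4^(i+1)) := by
        have h := C_sub2 f (i+1) (m + 2*4^(i+1)) a (by omega)
        rwa [show m + 2*4^(i+1) - 2*4^(i+1) = m from by ring] at h
      have hB : Bc f m = ! Bc f (m + 2*4^(i+1)) := by
        have h := B_sub2 f (i+1) (m + 2*4^(i+1)) a (by omega)
        rwa [show m + 2*4^(i+1) - 2*4^(i+1) = m from by ring] at h
      rw [hC, hB, ih _ a b hpar', xor_not]

lemma T1 (m : ℤ) (hpar : 2 ∣ m) : Cc f m = xor (f 0) (Bc f m) := by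
  obtain ⟨i, h1, h2⟩ := exists_lvl m
  have := Lq_mono i; have := Rq_mono i
  exact T1_aux f i m (by omega) (by omega) hpar

lemma T2_aux : ∀ (i : ℕ) (m : ℤ), -Lq (i+1) ≤ m → m ≤ Rq (i+1) → m % 4 = 3 →
    Cc f m = xor (f 1) (Bc f m) := by
  intro i
  induction i with
  | zero =>
    intro m h1 h2 hmod
    rw [Lq_rec, Lq_zero] at h1
    rw [Rq_rec, Rq_zero] at h2
    have hm : m = -1 := by omega
    subst hm
    have hs : Cc f (-1) = f 1 := by
      have := C_seamL f 0
      rw [Lq_zero] at this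
      norm_num at this
      exact this
    have hB : Bc f (-1) = Bc f 0 := by
      have h := B_sub f 0 0 (by rw [Lq_zero]; norm_num) (by rw [Rq_zero])
      norm_num at h
      exact h
    rw [hs, hB, B_zero, xor_false']
  | succ i ih =>
    intro m h1 h2 hmod
    have hLr := Lq_rec (i+1); have hRr := Rq_rec (i+1)
    have hLr' := Lq_rec i; have hRr' := Rq_rec i
    have hpw := pow4_pos (i+1)
    have hpw4 : (4:ℤ)^(i+1) = 4 * 4^i := by rw [pow_succ]; ring
    have hpwi := pow4_pos i
    rcases classify (i+1) m h1 h2 with ⟨a,b⟩ | ⟨a,b⟩ | ⟨a,b⟩ | ⟨a,b⟩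
    · exact ih m a b hmod
    · have hmod' : (m - 4^(i+1)) % 4 = 3 := by omega
      have hC : Cc f m = ! Cc f (m - 4^(i+1)) := by
        have h := C_add f (i+1) (m - 4^(i+1)) a (by omega)
        rwa [show m - 4^(i+1) + 4^(i+1) = m from by ring] at h
      have hB : Bc f m = ! Bc f (m - 4^(i+1)) := by
        have h := B_add f (i+1) (m - 4^(i+1)) a b
        rwa [show m - 4^(i+1) + 4^(i+1) = m from by ring] at h
      rw [hC, hB, ih _ a b hmod', xor_not]
    · have hmod' : (m + 4^(i+1)) % 4 = 3 := by omega
      have hC : Cc f m = Cc f (m + 4^(i+1)) := by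
        have h := C_sub f (i+1) (m + 4^(i+1)) a (by omega)
        rwa [show m + 4^(i+1) - 4^(i+1) = m from by ring] at h
      have hB : Bc f m = Bc f (m + 4^(i+1)) := by
        have h := B_sub f (i+1) (m + 4^(i+1)) a b
        rwa [show m + 4^(i+1) - 4^(i+1) = m from by ring] at h
      rw [hC, hB, ih _ a b hmod']
    · have hmod' : (m + 2*4^(i+1)) % 4 = 3 := by omega
      have hC : Cc f m = ! Cc f (m + 2*4^(i+1)) := by
        have h := C_sub2 f (i+1) (m + 2*4^(i+1)) a (by omega)
        rwa [show m + 2*4^(i+1) - 2*4^(i+1) = m from by ring] at h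
      have hB : Bc f m = ! Bc f (m + 2*4^(i+1)) := by
        have h := B_sub2 f (i+1) (m + 2*4^(i+1)) a (by omega)
        rwa [show m + 2*4^(i+1) - 2*4^(i+1) = m from by ring] at h
      rw [hC, hB, ih _ a b hmod', xor_not]

lemma T2 (m : ℤ) (hmod : m % 4 = 3) : Cc f m = xor (f 1) (Bc f m) := by
  obtain ⟨i, h1, h2⟩ := exists_lvl m
  have := Lq_mono i; have := Rq_mono i
  exact T2_aux f i m (by omega) (by omega) hmod

end TM18
namespace TM18

/-- The shifted parameter sequence. -/
def shf (f : ℕ → Bool) : ℕ → Bool := fun n => f (n+2)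

lemma T3_aux (f : ℕ → Bool) : ∀ (i : ℕ) (q : ℤ), -Lq i ≤ q → q ≤ Rq i →
    Cc f (4*q+1) = Cc (shf f) q := by
  intro i
  induction i with
  | zero =>
    intro q h1 h2
    have hq : q = 0 := by rw [Lq_zero] at h1; rw [Rq_zero] at h2; omega
    subst hq
    have e1 : Cc f 1 = f 2 := by
      have h := C_seamR f 1
      rw [Rq_rec, Rq_zero] at h
      norm_num at h
      exact h
    have e2 : Cc (shf f) 0 = f 2 := by
      have h := C_seamR (shf f) 0
      rw [Rq_zero] at h
      norm_num at h
      exact h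
    rw [show (4:ℤ)*0+1 = 1 from by ring, e1, e2]
  | succ i ih =>
    intro q h1 h2
    have hLr := Lq_rec i; have hRr := Rq_rec i
    have hRs := Rq_succ i
    have hRL := RL i
    have hpw := pow4_pos i
    have hpw4 : (4:ℤ)^(i+1) = 4 * 4^i := by rw [pow_succ]; ring
    by_cases hqa : q = Rq (i+1)
    · -- right seam
      subst hqa
      have e1 : Cc f (4 * Rq (i+1) + 1) = f (2*(i+2)) := by
        have h := C_seamR f (i+2)
        rwa [show Rq (i+2) = 4 * Rq (i+1) + 1 from Rq_rec (i+1)] at h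
      have e2 : Cc (shf f) (Rq (i+1)) = f (2*(i+2)) := by
        have h := C_seamR (shf f) (i+1)
        rw [h]
        exact congrArg f (by omega)
      rw [e1, e2]
    by_cases hqb : q = -Lq i - 1
    · -- left seam
      subst hqb
      have e1 : Cc f (4 * (-Lq i - 1) + 1) = f (2*(i+1)+1) := by
        have h := C_seamL f (i+1)
        rwa [show -Lq (i+1) - 1 = 4 * (-Lq i - 1) + 1 from by rw [Lq_rec]; ring] at h
      have e2 : Cc (shf f) (-Lq i - 1) = f (2*(i+1)+1) := by
        have h := C_seamL (shf f) i
        rw [h]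
        exact congrArg f (by omega)
      rw [e1, e2]
    rcases classify i q h1 h2 with ⟨a,b⟩ | ⟨a,b⟩ | ⟨a,b⟩ | ⟨a,b⟩
    · exact ih q a b
    · -- q = q' + 4^i with q' = q - 4^i ; q' ≠ Rq i since q ≠ Rq (i+1)
      have hne : q - 4^i ≤ Rq i - 1 := by
        rcases eq_or_lt_of_le b with he | hl
        · exfalso; apply hqa; omega
        · omega
      have hL : Cc f (4*q+1) = ! Cc f (4*(q - 4^i)+1) := by
        have h := C_add f (i+1) (4*(q - 4^i)+1) (by omega) (by omega)
        rwa [show 4*(q - 4^i)+1 + 4^(i+1) = 4*q+1 from by rw [hpw4]; ring] at h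
      have hR : Cc (shf f) q = ! Cc (shf f) (q - 4^i) := by
        have h := C_add (shf f) i (q - 4^i) a hne
        rwa [show q - 4^i + 4^i = q from by ring] at h
      rw [hL, hR, ih _ a b]
    · -- q = q' - 4^i with q' = q + 4^i ; q' ≠ Rq i since q ≠ -Lq i - 1
      have hne : q + 4^i ≤ Rq i - 1 := by
        rcases eq_or_lt_of_le b with he | hl
        · exfalso; apply hqb; omega
        · omega
      have hL : Cc f (4*q+1) = Cc f (4*(q + 4^i)+1) := by
        have h := C_sub f (i+1) (4*(q + 4^i)+1) (by omega) (by omega)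
        rwa [show 4*(q + 4^i)+1 - 4^(i+1) = 4*q+1 from by rw [hpw4]; ring] at h
      have hR : Cc (shf f) q = Cc (shf f) (q + 4^i) := by
        have h := C_sub (shf f) i (q + 4^i) a hne
        rwa [show q + 4^i - 4^i = q from by ring] at h
      rw [hL, hR, ih _ a b]
    · have hL : Cc f (4*q+1) = ! Cc f (4*(q + 2*4^i)+1) := by
        have h := C_sub2 f (i+1) (4*(q + 2*4^i)+1) (by omega) (by omega)
        rwa [show 4*(q + 2*4^i)+1 - 2*4^(i+1) = 4*q+1 from by rw [hpw4]; ring] at h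
      have hR : Cc (shf f) q = ! Cc (shf f) (q + 2*4^i) := by
        have h := C_sub2 (shf f) i (q + 2*4^i) a (by omega)
        rwa [show q + 2*4^i - 2*4^i = q from by ring] at h
      rw [hL, hR, ih _ a b]

lemma T3 (f : ℕ → Bool) (q : ℤ) : Cc f (4*q+1) = Cc (shf f) q := by
  obtain ⟨i, h1, h2⟩ := exists_lvl q
  exact T3_aux f i q h1 h2

end TM18
namespace TM18

lemma sigma_div4 (f : ℕ → Bool) (σ : ℤ)
    (hB : ∀ m : ℤ, -8 ≤ m → m ≤ 8 → Bc f m = Bc f (m + σ)) : 4 ∣ σ := by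
  obtain ⟨t, r, hr1, hr2, hst⟩ : ∃ (t r : ℤ), 0 ≤ r ∧ r ≤ 3 ∧ σ = 4*t + r :=
    ⟨σ / 4, σ % 4, by omega, by omega, by omega⟩
  interval_cases r
  · exact ⟨t, by omega⟩
  · -- r = 1
    exfalso
    have h3 : Bc f 1 = Bc f (t+1) := by
      have h := hB 3 (by norm_num) (by norm_num)
      rw [show (3:ℤ) + σ = 4*(t+1) from by omega, J0] at h
      rwa [show (3:ℤ) = 4*1-1 from by norm_num, J2] at h
    have h4 : Bc f 1 = ! Bc f (t+1) := by
      have h := hB 4 (by norm_num) (by norm_num)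
      rw [show (4:ℤ) + σ = 4*(t+1)+1 from by omega, J1] at h
      rwa [show (4:ℤ) = 4*1 from by norm_num, J0] at h
    rw [h3] at h4
    simp at h4
  · -- r = 2
    exfalso
    have h0 : Bc f 0 = ! Bc f (t+1) := by
      have h := hB 0 (by norm_num) (by norm_num)
      rwa [show (0:ℤ) + σ = 4*(t+1)-2 from by omega, J3] at h
    have h3 : Bc f 1 = ! Bc f (t+1) := by
      have h := hB 3 (by norm_num) (by norm_num)
      rw [show (3:ℤ) + σ = 4*(t+1)+1 from by omega, J1] at h
      rwa [show (3:ℤ) = 4*1-1 from by norm_num, J2] at h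
    have h4 : Bc f 1 = ! Bc f (t+2) := by
      have h := hB 4 (by norm_num) (by norm_num)
      rw [show (4:ℤ) + σ = 4*(t+2)-2 from by omega, J3] at h
      rwa [show (4:ℤ) = 4*1 from by norm_num, J0] at h
    have h7 : Bc f 2 = ! Bc f (t+2) := by
      have h := hB 7 (by norm_num) (by norm_num)
      rw [show (7:ℤ) + σ = 4*(t+2)+1 from by omega, J1] at h
      rwa [show (7:ℤ) = 4*2-1 from by norm_num, J2] at h
    have e01 : Bc f 0 = Bc f 1 := by rw [h0, h3]
    have e12 : Bc f 1 = Bc f 2 := by rw [h4, h7]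
    exact B_no3 f 0 (by norm_num; exact ⟨e01, e12⟩)
  · -- r = 3
    exfalso
    have h0 : Bc f 0 = Bc f (t+1) := by
      have h := hB 0 (by norm_num) (by norm_num)
      rwa [show (0:ℤ) + σ = 4*(t+1)-1 from by omega, J2] at h
    have h1 : Bc f 1 = Bc f (t+1) := by
      have h := hB 1 (by norm_num) (by norm_num)
      rwa [show (1:ℤ) + σ = 4*(t+1) from by omega, J0] at h
    have j1 : Bc f 1 = ! Bc f 0 := by
      have h := J1 f 0; norm_num at h; exact h
    have : (! Bc f 0) = Bc f 0 := by rw [← j1, h1, ← h0]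
    simp at this

end TM18
namespace TM18

lemma main_ind : ∀ (k : ℕ) (f g : ℕ → Bool) (σ : ℤ), f k ≠ g k →
    (∀ m : ℤ, -(4^(k+2)) ≤ m → m ≤ 4^(k+2) → Bc f m = Bc f (m + σ)) →
    (∀ m : ℤ, -(4^(k+2)) ≤ m → m ≤ 4^(k+2) → Cc f m = Cc g (m + σ)) → False := by
  intro k
  induction k using Nat.strong_induction_on with
  | _ k ih =>
    intro f g σ hne hB hC
    have hp0 : (1:ℤ) ≤ 4^k := pow4_pos k
    have hp1 : (4:ℤ)^(k+1) = 4 * 4^k := by ring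
    have hp2 : (4:ℤ)^(k+2) = 16 * 4^k := by ring
    have h4 : 4 ∣ σ := sigma_div4 f σ (fun m h1 h2 => hB m (by omega) (by omega))
    obtain ⟨t, ht⟩ := h4
    have hBt : ∀ q : ℤ, -(4^(k+1)) ≤ q → q ≤ 4^(k+1) → Bc f q = Bc f (q + t) := by
      intro q h1 h2
      calc Bc f q = Bc f (4*q) := (J0 f q).symm
        _ = Bc f (4*q + σ) := hB (4*q) (by omega) (by omega)
        _ = Bc f (4*(q+t)) := by rw [show 4*q + σ = 4*(q+t) from by omega]
        _ = Bc f (q+t) := J0 f (q+t)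
    match k, ih, hne, hB, hC, hBt with
    | 0, ih, hne, hB, hC, hBt =>
      apply hne
      have e1 : Cc f 0 = f 0 := by
        have h := C_seamR f 0
        rwa [Rq_zero, Nat.mul_zero] at h
      have e2 : Cc f 0 = Cc g σ := by
        have h := hC 0 (by norm_num) (by norm_num)
        rwa [zero_add] at h
      have e3 : Cc g σ = xor (g 0) (Bc g σ) := T1 g σ (by omega)
      have e4 : Bc g σ = Bc f σ := B_ext g f σ
      have e5 : Bc f σ = Bc f 0 := by
        have h := hB 0 (by norm_num) (by norm_num)
        rw [zero_add] at h
        exact h.symm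
      have : f 0 = xor (g 0) false := by
        rw [← B_zero f, ← e5, ← e4, ← e3, ← e2, e1]
      rw [xor_false'] at this
      exact this
    | 1, ih, hne, hB, hC, hBt =>
      apply hne
      have e1 : Cc f (-1) = f 1 := by
        have h := C_seamL f 0
        rw [Lq_zero] at h
        norm_num at h
        exact h
      have e2 : Cc f (-1) = Cc g (-1 + σ) := hC (-1) (by norm_num) (by norm_num)
      have e3 : Cc g (-1 + σ) = xor (g 1) (Bc g (-1 + σ)) := T2 g _ (by omega)
      have e4 : Bc g (-1 + σ) = Bc f (-1 + σ) := B_ext g f _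
      have e5 : Bc f (-1 + σ) = Bc f (-1) :=
        (hB (-1) (by norm_num) (by norm_num)).symm
      have e6 : Bc f (-1) = false := by
        have h := B_sub f 0 0 (by rw [Lq_zero]; norm_num) (by rw [Rq_zero])
        norm_num at h
        rw [h, B_zero]
      have : f 1 = xor (g 1) false := by
        rw [← e6, ← e5, ← e4, ← e3, ← e2, e1]
      rw [xor_false'] at this
      exact this
    | (k'+2), ih, hne, hB, hC, hBt =>
      have hq0 : (1:ℤ) ≤ 4^k' := pow4_pos k'
      have hq2 : (4:ℤ)^(k'+2) = 16 * 4^k' := by ring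
      have hq3 : (4:ℤ)^(k'+2+1) = 64 * 4^k' := by ring
      have hq4 : (4:ℤ)^(k'+2+2) = 256 * 4^k' := by ring
      apply ih k' (by omega) (shf f) (shf g) t hne
      · intro q h1 h2
        calc Bc (shf f) q = Bc f q := B_ext (shf f) f q
          _ = Bc f (q + t) := hBt q (by omega) (by omega)
          _ = Bc (shf f) (q + t) := B_ext f (shf f) _
      · intro q h1 h2
        calc Cc (shf f) q = Cc f (4*q+1) := (T3 f q).symm
          _ = Cc g (4*q+1 + σ) := hC (4*q+1) (by omega) (by omega)
          _ = Cc g (4*(q+t)+1) := by rw [show 4*q+1+σ = 4*(q+t)+1 from by omega]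
          _ = Cc (shf g) (q + t) := T3 g (q+t)

lemma align (f g : ℕ → Bool) (s : ℤ)
    (hs : ∀ j : ℤ, -8 ≤ j → j ≤ 8 → chi f j = chi g (j + s)) : 4 ∣ s := by
  obtain ⟨t, r, hr1, hr2, hst⟩ : ∃ (t r : ℤ), 0 ≤ r ∧ r ≤ 3 ∧ s = 4*t + r :=
    ⟨s / 4, s % 4, by omega, by omega, by omega⟩
  have kf1 : chi f 1 = chi f 0 := by
    have h := K1 f 0; norm_num at h; exact h
  have kf2 : chi f 2 = ! chi f 0 := by
    have h := K2 f 0; norm_num at h; exact h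
  interval_cases r
  · exact ⟨t, by omega⟩
  · -- r = 1
    exfalso
    have h0 : chi f 0 = chi g (4*t) := by
      have h := hs 0 (by norm_num) (by norm_num)
      rw [show (0:ℤ) + s = 4*t+1 from by omega] at h
      rwa [K1] at h
    have h1 : chi f 0 = ! chi g (4*t) := by
      have h := hs 1 (by norm_num) (by norm_num)
      rw [show (1:ℤ) + s = 4*t+2 from by omega, K2, kf1] at h
      exact h
    rw [h0] at h1
    simp at h1
  · -- r = 2
    exfalso
    have h0 : chi f 0 = ! Bc g t := by
      have h := hs 0 (by norm_num) (by norm_num)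
      rw [show (0:ℤ) + s = 4*t+2 from by omega, K2] at h
      exact h
    have h2 : chi f 2 = Bc g (t+1) := by
      have h := hs 2 (by norm_num) (by norm_num)
      rw [show (2:ℤ) + s = 4*(t+1) from by omega] at h
      exact h
    have h4 : chi f 4 = ! Bc g (t+1) := by
      have h := hs 4 (by norm_num) (by norm_num)
      rw [show (4:ℤ) + s = 4*(t+1)+2 from by omega, K2] at h
      exact h
    have h6 : chi f 6 = Bc g (t+2) := by
      have h := hs 6 (by norm_num) (by norm_num)
      rw [show (6:ℤ) + s = 4*(t+2) from by omega] at h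
      exact h
    have kf6 : chi f 6 = ! chi f 4 := by
      have h := K2 f 1; norm_num at h; exact h
    have e01 : Bc g t = Bc g (t+1) := by
      rw [← h2, kf2, h0, Bool.not_not]
    have e12 : Bc g (t+1) = Bc g (t+2) := by
      rw [← h6, kf6, h4, Bool.not_not]
    exact B_no3 g t ⟨e01, e12⟩
  · -- r = 3
    exfalso
    have h1 : chi f 1 = chi g (4*(t+1)) := by
      have h := hs 1 (by norm_num) (by norm_num)
      rwa [show (1:ℤ) + s = 4*(t+1) from by omega] at h
    have h2 : chi f 2 = chi g (4*(t+1)) := by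
      have h := hs 2 (by norm_num) (by norm_num)
      rw [show (2:ℤ) + s = 4*(t+1)+1 from by omega, K1] at h
      exact h
    rw [kf2, ← kf1, h1] at h2
    simp at h2

end TM18

/-- for distinct `f, g`, `χ^f` is not finitely covered by `χ^g`:
some finite subsequence of `χ^f` does not embed into `χ^g`. -/
theorem statement18 (f g : ℕ → Bool) (hfg : f ≠ g) :
    ∃ c d : ℤ, ¬ ∃ s : ℤ, ∀ j : ℤ, c ≤ j → j ≤ d → chi f j = chi g (j + s) := by
  obtain ⟨k, hk⟩ : ∃ k, f k ≠ g k := by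
    by_contra h
    push_neg at h
    exact hfg (funext fun n => h n)
  refine ⟨-(4^(k+5)), 4^(k+5), ?_⟩
  rintro ⟨s, hs⟩
  have hp0 : (1:ℤ) ≤ 4^k := TM18.pow4_pos k
  have hp5 : (4:ℤ)^(k+5) = 1024 * 4^k := by ring
  have hp2 : (4:ℤ)^(k+2) = 16 * 4^k := by ring
  have h4 : 4 ∣ s := TM18.align f g s (fun j h1 h2 => hs j (by omega) (by omega))
  obtain ⟨σ, hσ⟩ := h4
  apply TM18.main_ind k f g σ hk
  · intro m h1 h2
    have h := hs (4*m) (by omega) (by omega)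
    calc TM18.Bc f m = TM18.Bc g (m+σ) := by
          have e : 4*(m+σ) = 4*m + s := by omega
          unfold TM18.Bc
          rw [e]
          exact h
      _ = TM18.Bc f (m+σ) := TM18.B_ext g f _
  · intro m h1 h2
    have h := hs (4*m+3) (by omega) (by omega)
    have e : 4*(m+σ)+3 = (4*m+3) + s := by omega
    unfold TM18.Cc
    rw [e]
    exact h
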